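/- Let a, b, c ∈ ℝ³, let 0 ≤ ε ≤ 1, and let σ > 0 be such that |⟨a, b × c⟩| ≥ σ·‖a‖·‖b‖·‖c‖. Let ã, b̃, c̃ ∈ ℝ³ satisfy |ã_i − a_i| ≤ ε·|a_i|, |b̃_i − b_i| ≤ ε·|b_i|, and |c̃_i − c_i| ≤ ε·|c_i| for each i ∈ {1,2,3}. Then |⟨ã, b̃ × c̃⟩ − ⟨a, b × c⟩| ≤ (42·ε/σ)·|⟨a, b × c⟩|; that is, the relative error of the perturbed triple product is at most 42·ε/σ. -/

import Mathlib

/-!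
The triple product `⟪a, b × c⟫` is the determinant of the matrix with rows `a, b, c`, a signed
sum of `3! = 6` monomials `a_i b_j c_k`. Perturbing each factor of such a monomial by a relative
error at most `ε` changes it by at most `((1 + ε)³ - 1) |a_i b_j c_k| ≤ 7ε ‖a‖‖b‖‖c‖`, so the
triple product moves by at most `42 ε ‖a‖‖b‖‖c‖`, which the hypothesis bounds by
`(42 ε / σ) |⟪a, b × c⟫|`.
-/

open scoped RealInnerProductSpace

/-- The cross product on `ℝ³`. -/
noncomputable def cross3 (a b : EuclideanSpace ℝ (Fin 3)) : EuclideanSpace ℝ (Fin 3) :=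
  WithLp.toLp 2 (crossProduct (a : Fin 3 → ℝ) (b : Fin 3 → ℝ))

open Finset Equiv Matrix

theorem abs_prod_sub_prod_le {ι : Type*} (s : Finset ι) {x y : ι → ℝ} {ε : ℝ} (hε : 0 ≤ ε)
    (h : ∀ i ∈ s, |y i - x i| ≤ ε * |x i|) :
    |∏ i ∈ s, y i - ∏ i ∈ s, x i| ≤ ((1 + ε) ^ #s - 1) * ∏ i ∈ s, |x i| := by
  classical
  induction s using Finset.induction_on with
  | empty => simp
  | insert a s ha ih =>
    have hs : ∀ i ∈ s, |y i - x i| ≤ ε * |x i| := fun i hi => h i (mem_insert_of_mem hi)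
    have ih := ih hs
    set X := ∏ i ∈ s, x i
    set Y := ∏ i ∈ s, y i
    set P := ∏ i ∈ s, |x i|
    have hP : 0 ≤ P := prod_nonneg fun i _ => abs_nonneg _
    have hY : |Y| ≤ (1 + ε) ^ #s * P := by
      have hX : |X| = P := abs_prod _ _
      linarith [abs_sub_abs_le_abs_sub Y X]
    have ha' := h a (mem_insert_self a s)
    rw [prod_insert ha, prod_insert ha, prod_insert ha, card_insert_of_notMem ha]
    calc |y a * Y - x a * X|
        = |(y a - x a) * Y + x a * (Y - X)| := by congr 1; ring
      _ ≤ |y a - x a| * |Y| + |x a| * |Y - X| := by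
          rw [← abs_mul, ← abs_mul]; exact abs_add_le _ _
      _ ≤ ε * |x a| * ((1 + ε) ^ #s * P) + |x a| * (((1 + ε) ^ #s - 1) * P) := by
          gcongr
      _ = ((1 + ε) ^ (#s + 1) - 1) * (|x a| * P) := by ring

theorem abs_det_sub_det_le {n : Type*} [Fintype n] [DecidableEq n] {M M' : Matrix n n ℝ}
    {ε : ℝ} (hε : 0 ≤ ε) (h : ∀ i j, |M' i j - M i j| ≤ ε * |M i j|) :
    |M'.det - M.det| ≤ ((1 + ε) ^ Fintype.card n - 1) * ∑ σ : Perm n, ∏ i, |M (σ i) i| := by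
  rw [det_apply', det_apply', ← sum_sub_distrib, mul_sum]
  refine (abs_sum_le_sum_abs _ _).trans (sum_le_sum fun σ _ => ?_)
  have hsign : |((Perm.sign σ : ℤ) : ℝ)| = 1 := by
    rcases Int.units_eq_one_or (Perm.sign σ) with hσ | hσ <;> simp [hσ]
  rw [← mul_sub, abs_mul, hsign, one_mul, ← card_univ]
  exact abs_prod_sub_prod_le univ hε fun i _ => h (σ i) i

theorem prod_abs_apply_perm_le_prod_norm {n : Type*} [Fintype n] (M : Matrix n n ℝ)
    (σ : Perm n) : ∏ i, |M (σ i) i| ≤ ∏ i, ‖WithLp.toLp 2 (M i)‖ := by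
  calc ∏ i, |M (σ i) i| ≤ ∏ i, ‖WithLp.toLp 2 (M (σ i))‖ :=
        prod_le_prod (fun i _ => abs_nonneg _) fun i _ =>
          PiLp.norm_apply_le (WithLp.toLp 2 (M (σ i))) i
    _ = ∏ i, ‖WithLp.toLp 2 (M i)‖ := Equiv.prod_comp σ fun i => ‖WithLp.toLp 2 (M i)‖

theorem inner_cross3_eq_det (u v w : EuclideanSpace ℝ (Fin 3)) :
    ⟪u, cross3 v w⟫ = det ![u.ofLp, v.ofLp, w.ofLp] := by
  rw [EuclideanSpace.inner_eq_star_dotProduct, star_trivial, dotProduct_comm, cross3,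
    triple_product_eq_det]

theorem abs_inner_cross3_sub_le {a b c ta tb tc : EuclideanSpace ℝ (Fin 3)} {ε : ℝ}
    (hε0 : 0 ≤ ε) (hε1 : ε ≤ 1)
    (ha : ∀ i, |ta i - a i| ≤ ε * |a i|) (hb : ∀ i, |tb i - b i| ≤ ε * |b i|)
    (hc : ∀ i, |tc i - c i| ≤ ε * |c i|) :
    |⟪ta, cross3 tb tc⟫ - ⟪a, cross3 b c⟫| ≤ 42 * ε * (‖a‖ * ‖b‖ * ‖c‖) := by
  set M := ![a.ofLp, b.ofLp, c.ofLp]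
  have hentries : ∀ i j, |![ta.ofLp, tb.ofLp, tc.ofLp] i j - M i j| ≤ ε * |M i j| := by
    intro i j
    fin_cases i
    exacts [ha j, hb j, hc j]
  have hsum : ∑ σ : Perm (Fin 3), ∏ i, |M (σ i) i| ≤ 6 * (‖a‖ * ‖b‖ * ‖c‖) := by
    calc ∑ σ : Perm (Fin 3), ∏ i, |M (σ i) i|
        ≤ ∑ _σ : Perm (Fin 3), ∏ i, ‖WithLp.toLp 2 (M i)‖ :=
          sum_le_sum fun σ _ => prod_abs_apply_perm_le_prod_norm M σ
      _ = 6 * (‖a‖ * ‖b‖ * ‖c‖) := by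
          simp [M, Fintype.card_perm, Nat.factorial, Fin.prod_univ_three, mul_assoc]
  have hpow : (1 + ε) ^ 3 - 1 ≤ 7 * ε := by
    nlinarith [mul_nonneg hε0 (sub_nonneg.2 hε1),
      mul_nonneg (mul_nonneg hε0 hε0) (sub_nonneg.2 hε1)]
  rw [inner_cross3_eq_det, inner_cross3_eq_det]
  calc _ ≤ ((1 + ε) ^ 3 - 1) * ∑ σ : Perm (Fin 3), ∏ i, |M (σ i) i| := by
        simpa using abs_det_sub_det_le hε0 hentries
    _ ≤ 7 * ε * (6 * (‖a‖ * ‖b‖ * ‖c‖)) := by gcongr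
    _ = 42 * ε * (‖a‖ * ‖b‖ * ‖c‖) := by ring

theorem stmt_11 (a b c : EuclideanSpace ℝ (Fin 3)) (ε σ : ℝ) (hε0 : 0 ≤ ε) (hε1 : ε ≤ 1)
    (hσ : 0 < σ) (hlow : σ * (‖a‖ * ‖b‖ * ‖c‖) ≤ |⟪a, cross3 b c⟫|)
    (ta tb tc : EuclideanSpace ℝ (Fin 3))
    (ha : ∀ i : Fin 3, |ta i - a i| ≤ ε * |a i|)
    (hb : ∀ i : Fin 3, |tb i - b i| ≤ ε * |b i|)
    (hc : ∀ i : Fin 3, |tc i - c i| ≤ ε * |c i|) :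
    |⟪ta, cross3 tb tc⟫ - ⟪a, cross3 b c⟫| ≤ (42 * ε / σ) * |⟪a, cross3 b c⟫| := by
  have hnorms : ‖a‖ * ‖b‖ * ‖c‖ ≤ |⟪a, cross3 b c⟫| / σ := by
    rw [le_div_iff₀ hσ]; linarith
  calc _ ≤ 42 * ε * (‖a‖ * ‖b‖ * ‖c‖) := abs_inner_cross3_sub_le hε0 hε1 ha hb hc
    _ ≤ 42 * ε * (|⟪a, cross3 b c⟫| / σ) := by gcongr
    _ = (42 * ε / σ) * |⟪a, cross3 b c⟫| := by ring
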